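/- arXiv:2412.03776 — 9 statements merged into one kernel-verified Lean document; each statement's English description precedes it below -/
import Mathlib

section
/- Let C be a category equipped with a dagger, a zero object, binary dagger biproducts, and dagger equalizers of all parallel pairs. Then every morphism f : A ⟶ B of C factors as f = e ≫ m where e is an epimorphism and m is a dagger monomorphism. -/
open CategoryTheory CategoryTheory.Limits

/-- In a dagger category with a zero object, binary dagger biproducts and
dagger equalizers, every morphism factors as an epimorphism followed by a dagger
monomorphism. -/
theorem dagger_epi_daggerMono_factorisation
    {C : Type*} [Category C] [HasZeroObject C] [HasZeroMorphisms C] [HasBinaryBiproducts C]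
    -- the dagger
    (dag : ∀ {A B : C}, (A ⟶ B) → (B ⟶ A))
    (dag_id : ∀ A : C, dag (𝟙 A) = 𝟙 A)
    (dag_comp : ∀ {A B D : C} (f : A ⟶ B) (g : B ⟶ D), dag (f ≫ g) = dag g ≫ dag f)
    (dag_dag : ∀ {A B : C} (f : A ⟶ B), dag (dag f) = f)
    -- the binary biproducts are dagger biproducts
    (dag_fst : ∀ A B : C, dag (biprod.fst : A ⊞ B ⟶ A) ≫ biprod.fst = 𝟙 A)
    (dag_snd : ∀ A B : C, dag (biprod.snd : A ⊞ B ⟶ B) ≫ biprod.snd = 𝟙 B)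
    (dag_snd_fst : ∀ A B : C, dag (biprod.snd : A ⊞ B ⟶ B) ≫ biprod.fst = 0)
    (dag_fst_snd : ∀ A B : C, dag (biprod.fst : A ⊞ B ⟶ A) ≫ biprod.snd = 0)
    -- dagger equalizers of all parallel pairs
    (dag_eq : ∀ {A B : C} (f g : A ⟶ B), ∃ (E : C) (e : E ⟶ A) (w : e ≫ f = e ≫ g),
      e ≫ dag e = 𝟙 E ∧ Nonempty (IsLimit (Fork.ofι e w)))
    -- conclusion
    {A B : C} (f : A ⟶ B) :
    ∃ (X : C) (e : A ⟶ X) (m : X ⟶ B), Epi e ∧ m ≫ dag m = 𝟙 X ∧ e ≫ m = f := by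
  -- daggers of the projections are the injections
  have hinl : dag (biprod.fst : B ⊞ B ⟶ B) = biprod.inl := by
    apply biprod.hom_ext
    · simpa using dag_fst B B
    · simpa using dag_fst_snd B B
  have hinr : dag (biprod.snd : B ⊞ B ⟶ B) = biprod.inr := by
    apply biprod.hom_ext
    · simpa using dag_snd_fst B B
    · simpa using dag_snd B B
  -- the dagger equalizer whose dagger is the cokernel pair of f
  obtain ⟨Q, k, wk, hk, ⟨Lk⟩⟩ :=
    dag_eq ((biprod.fst : B ⊞ B ⟶ B) ≫ dag f) ((biprod.snd : B ⊞ B ⟶ B) ≫ dag f)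
  set i₁ : B ⟶ Q := dag (biprod.fst : B ⊞ B ⟶ B) ≫ dag k with hi₁
  set i₂ : B ⟶ Q := dag (biprod.snd : B ⊞ B ⟶ B) ≫ dag k with hi₂
  have hfi : f ≫ i₁ = f ≫ i₂ := by
    have h := congrArg dag wk
    simp only [dag_comp, dag_dag, Category.assoc] at h
    simpa [hi₁, hi₂] using h
  -- the coequalizer property of `dag k`
  have hcofork : ∀ {Z : C} (z : B ⊞ B ⟶ Z),
      f ≫ dag (biprod.fst : B ⊞ B ⟶ B) ≫ z = f ≫ dag (biprod.snd : B ⊞ B ⟶ B) ≫ z →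
      ∃ d : Q ⟶ Z, dag k ≫ d = z := by
    intro Z z hz
    have hz' : dag z ≫ ((biprod.fst : B ⊞ B ⟶ B) ≫ dag f)
        = dag z ≫ ((biprod.snd : B ⊞ B ⟶ B) ≫ dag f) := by
      have h := congrArg dag hz
      simp only [dag_comp, dag_dag, Category.assoc] at h
      simpa using h
    obtain ⟨t, ht⟩ := Fork.IsLimit.lift' Lk (dag z) hz'
    rw [Fork.ι_ofι] at ht
    refine ⟨dag t, ?_⟩
    have h := congrArg dag ht
    rw [dag_comp, dag_dag] at h
    exact h
  -- the image: dagger equalizer of the cokernel pair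
  obtain ⟨M, m, wm, hm, ⟨Lm⟩⟩ := dag_eq i₁ i₂
  obtain ⟨e, he⟩ := Fork.IsLimit.lift' Lm f hfi
  rw [Fork.ι_ofι] at he
  have mono_m : ∀ {Z : C} (a b : Z ⟶ M), a ≫ m = b ≫ m → a = b := by
    intro Z a b hab
    calc a = a ≫ m ≫ dag m := by rw [hm, Category.comp_id]
    _ = (a ≫ m) ≫ dag m := by rw [Category.assoc]
    _ = (b ≫ m) ≫ dag m := by rw [hab]
    _ = b := by rw [Category.assoc, hm, Category.comp_id]
  refine ⟨M, e, m, ?_, hm, he⟩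
  constructor
  intro Z u v huv
  obtain ⟨P, q, wq, hq, ⟨Lq⟩⟩ := dag_eq u v
  obtain ⟨t, ht⟩ := Fork.IsLimit.lift' Lq e huv
  rw [Fork.ι_ofι] at ht
  set n : P ⟶ B := q ≫ m with hn_def
  have hn : n ≫ dag n = 𝟙 P := by
    rw [hn_def, dag_comp, Category.assoc]
    calc q ≫ m ≫ dag m ≫ dag q = q ≫ (m ≫ dag m) ≫ dag q := by simp only [Category.assoc]
    _ = q ≫ dag q := by rw [hm, Category.id_comp]
    _ = 𝟙 P := hq
  have hfn : f ≫ dag n ≫ n = f := by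
    have h1 : f = t ≫ n := by rw [hn_def, ← Category.assoc, ht, he]
    have hnn : n ≫ dag n ≫ n = n := by rw [← Category.assoc, hn, Category.id_comp]
    rw [h1, Category.assoc, hnn]
  -- the retraction of n approximated inside B
  set z : B ⊞ B ⟶ B := biprod.desc (dag n ≫ n) (𝟙 B) with hz_def
  have hz1 : (biprod.inl : B ⟶ B ⊞ B) ≫ z = dag n ≫ n := biprod.inl_desc _ _
  have hz2 : (biprod.inr : B ⟶ B ⊞ B) ≫ z = 𝟙 B := biprod.inr_desc _ _
  obtain ⟨d, hd⟩ : ∃ d : Q ⟶ B, dag k ≫ d = z := by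
    apply hcofork
    rw [hinl, hinr, hz1, hz2, hfn, Category.comp_id]
  have hm_fac : m ≫ dag n ≫ n = m := by
    have h2 : m ≫ dag (biprod.fst : B ⊞ B ⟶ B) ≫ dag k ≫ d
        = m ≫ dag (biprod.snd : B ⊞ B ⟶ B) ≫ dag k ≫ d := by
      have h3 := congrArg (· ≫ d) wm
      simpa [hi₁, hi₂, Category.assoc] using h3
    rw [← hz1, ← hd, ← hinl, h2, hinr, hd, hz2, Category.comp_id]
  have hret : (m ≫ dag n) ≫ q = 𝟙 M := by
    apply mono_m
    rw [Category.id_comp, Category.assoc, Category.assoc, ← hn_def]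
    exact hm_fac
  calc u = ((m ≫ dag n) ≫ q) ≫ u := by rw [hret, Category.id_comp]
  _ = (m ≫ dag n) ≫ q ≫ u := by rw [Category.assoc]
  _ = (m ≫ dag n) ≫ q ≫ v := by rw [wq]
  _ = v := by rw [← Category.assoc, hret, Category.id_comp]
end

section
/- Let C be a category equipped with a dagger, a zero object, binary dagger biproducts, and dagger equalizers of all parallel pairs, and let K be a simple object of C. Then every nonzero morphism λ : K ⟶ K is an isomorphism. -/
open CategoryTheory CategoryTheory.Limits ZeroObject

/-- In a dagger category with a zero object, binary dagger biproducts and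
dagger equalizers, every nonzero endomorphism of a simple object is an isomorphism. -/
theorem simple_object_nonzero_endo_isIso
    {C : Type*} [Category C] [HasZeroObject C] [HasZeroMorphisms C] [HasBinaryBiproducts C]
    -- the dagger
    (dag : ∀ {A B : C}, (A ⟶ B) → (B ⟶ A))
    (dag_id : ∀ A : C, dag (𝟙 A) = 𝟙 A)
    (dag_comp : ∀ {A B D : C} (f : A ⟶ B) (g : B ⟶ D), dag (f ≫ g) = dag g ≫ dag f)
    (dag_dag : ∀ {A B : C} (f : A ⟶ B), dag (dag f) = f)
    -- the binary biproducts are dagger biproducts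
    (dag_fst : ∀ A B : C, dag (biprod.fst : A ⊞ B ⟶ A) ≫ biprod.fst = 𝟙 A)
    (dag_snd : ∀ A B : C, dag (biprod.snd : A ⊞ B ⟶ B) ≫ biprod.snd = 𝟙 B)
    (dag_snd_fst : ∀ A B : C, dag (biprod.snd : A ⊞ B ⟶ B) ≫ biprod.fst = 0)
    (dag_fst_snd : ∀ A B : C, dag (biprod.fst : A ⊞ B ⟶ A) ≫ biprod.snd = 0)
    -- dagger equalizers of all parallel pairs
    (dag_eq : ∀ {A B : C} (f g : A ⟶ B), ∃ (E : C) (e : E ⟶ A) (w : e ≫ f = e ≫ g),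
      e ≫ dag e = 𝟙 E ∧ Nonempty (IsLimit (Fork.ofι e w)))
    -- K is a simple object
    (K : C)
    (K_nonzero : ¬ IsZero K)
    (K_simple : ∀ {A : C} (m : A ⟶ K), Mono m → m = 0 ∨ IsIso m)
    -- conclusion
    (lam : K ⟶ K) (hlam : lam ≠ 0) :
    IsIso lam := by

  -- dagger of zero is zero
  have dag_zero : ∀ {A B : C}, dag (0 : A ⟶ B) = 0 := by
    intro A B
    have h : (0 : A ⟶ B) = (0 : A ⟶ (0 : C)) ≫ (0 : (0 : C) ⟶ B) := by simp
    rw [h, dag_comp]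
    have h1 : dag (0 : (0 : C) ⟶ B) = 0 := (isZero_zero C).eq_of_tgt _ _
    rw [h1, zero_comp]
  -- lam is a monomorphism
  have hmono : Mono lam := by
    constructor
    intro X x y hxy
    obtain ⟨E, e, w, he, ⟨hl⟩⟩ := dag_eq (dag x) (dag y)
    have emono : Mono e := by
      constructor
      intro T u v huv
      calc u = u ≫ e ≫ dag e := by rw [he, Category.comp_id]
        _ = (u ≫ e) ≫ dag e := by rw [Category.assoc]
        _ = (v ≫ e) ≫ dag e := by rw [huv]
        _ = v ≫ e ≫ dag e := by rw [Category.assoc]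
        _ = v := by rw [he, Category.comp_id]
    rcases K_simple e emono with h0 | hiso
    · exfalso
      have hw : dag lam ≫ dag x = dag lam ≫ dag y := by
        rw [← dag_comp, ← dag_comp, hxy]
      obtain ⟨u, hu⟩ := Fork.IsLimit.lift' hl (dag lam) hw
      simp only [Fork.ι_ofι] at hu
      obtain ⟨v, hv⟩ : ∃ v : K ⟶ E, v ≫ e = dag lam := ⟨u, hu⟩
      rw [h0, comp_zero] at hv
      have hdl : dag lam = 0 := hv.symm
      apply hlam
      rw [← dag_dag lam, hdl, dag_zero]
    · have hxy' : dag x = dag y := by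
        haveI := hiso
        exact (cancel_epi e).mp w
      calc x = dag (dag x) := (dag_dag x).symm
        _ = dag (dag y) := by rw [hxy']
        _ = y := dag_dag y
  rcases K_simple lam hmono with h0 | hiso
  · exact absurd h0 hlam
  · exact hiso
end

section
/- Let C be a category equipped with a dagger and dagger equalizers of all parallel pairs. Then dagger monomorphisms are stable under pullback: for every dagger monomorphism f : A ⟶ H and every morphism g : B ⟶ H there exist an object P and morphisms f' : P ⟶ B and g' : P ⟶ A such that f' is a dagger monomorphism, g' ≫ f = f' ≫ g, and the resulting commutative square is a pullback square. -/
open CategoryTheory CategoryTheory.Limits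

/-- In a dagger category with dagger equalizers of all parallel pairs,
dagger monomorphisms are stable under pullback. -/
theorem daggerMono_pullback_stable
    {C : Type*} [Category C]
    -- the dagger
    (dag : ∀ {A B : C}, (A ⟶ B) → (B ⟶ A))
    (dag_id : ∀ A : C, dag (𝟙 A) = 𝟙 A)
    (dag_comp : ∀ {A B D : C} (f : A ⟶ B) (g : B ⟶ D), dag (f ≫ g) = dag g ≫ dag f)
    (dag_dag : ∀ {A B : C} (f : A ⟶ B), dag (dag f) = f)
    -- dagger equalizers of all parallel pairs
    (dag_eq : ∀ {A B : C} (f g : A ⟶ B), ∃ (E : C) (e : E ⟶ A) (w : e ≫ f = e ≫ g),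
      e ≫ dag e = 𝟙 E ∧ Nonempty (IsLimit (Fork.ofι e w)))
    -- a dagger monomorphism f and an arbitrary morphism g with common codomain
    {A B H : C} (f : A ⟶ H) (hf : f ≫ dag f = 𝟙 A) (g : B ⟶ H) :
    ∃ (P : C) (f' : P ⟶ B) (g' : P ⟶ A) (w : g' ≫ f = f' ≫ g),
      f' ≫ dag f' = 𝟙 P ∧ Nonempty (IsLimit (PullbackCone.mk g' f' w)) := by
  obtain ⟨E, e, w, he, ⟨hE⟩⟩ := dag_eq (g ≫ dag f ≫ f) g
  have hmono : Mono e := by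
    haveI : IsSplitMono e := ⟨⟨⟨dag e, he⟩⟩⟩
    infer_instance
  have key : ∀ s : PullbackCone f g, s.snd ≫ g ≫ dag f ≫ f = s.snd ≫ g := by
    intro s
    have hc := s.condition
    calc s.snd ≫ g ≫ dag f ≫ f = (s.fst ≫ f) ≫ dag f ≫ f := by
          rw [← Category.assoc, hc]
      _ = s.fst ≫ f := by
          rw [Category.assoc]; rw [show f ≫ dag f ≫ f = f by
            rw [← Category.assoc, hf, Category.id_comp]]
      _ = s.snd ≫ g := hc
  refine ⟨E, e, e ≫ g ≫ dag f, by simpa using w, he, ⟨?_⟩⟩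
  refine PullbackCone.IsLimit.mk _ (fun s => hE.lift (Fork.ofι s.snd (key s))) ?_ ?_ ?_
  · intro s
    have hl : hE.lift (Fork.ofι s.snd (key s)) ≫ e = s.snd :=
      hE.fac _ WalkingParallelPair.zero
    have hc := s.condition
    calc hE.lift (Fork.ofι s.snd (key s)) ≫ e ≫ g ≫ dag f
        = (hE.lift (Fork.ofι s.snd (key s)) ≫ e) ≫ g ≫ dag f := by simp
      _ = s.snd ≫ g ≫ dag f := by rw [hl]
      _ = (s.fst ≫ f) ≫ dag f := by rw [← Category.assoc, hc, Category.assoc]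
      _ = s.fst := by rw [Category.assoc, hf, Category.comp_id]
  · intro s
    exact hE.fac _ WalkingParallelPair.zero
  · intro s m _ hm2
    have hl : hE.lift (Fork.ofι s.snd (key s)) ≫ e = s.snd :=
      hE.fac _ WalkingParallelPair.zero
    exact hmono.right_cancellation _ _ (by rw [hl]; exact hm2)
end

section
/- Let C be a category equipped with a dagger, a zero object, and binary dagger biproducts, and define addition of parallel morphisms via the biproduct structure. Then the dagger is additive: for all f, g : A ⟶ B one has (f + g)† = f† + g†. -/
open CategoryTheory CategoryTheory.Limits

/-- In a dagger category with a zero object and binary dagger biproducts,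
the dagger is additive for the biproduct-induced addition:
`(f + g)† = f† + g†`, where `f + g := Δ ≫ (f ⊞ g) ≫ ∇`. -/
theorem dagger_additive
    {C : Type*} [Category C] [HasZeroObject C] [HasZeroMorphisms C] [HasBinaryBiproducts C]
    -- the dagger
    (dag : ∀ {A B : C}, (A ⟶ B) → (B ⟶ A))
    (dag_id : ∀ A : C, dag (𝟙 A) = 𝟙 A)
    (dag_comp : ∀ {A B D : C} (f : A ⟶ B) (g : B ⟶ D), dag (f ≫ g) = dag g ≫ dag f)
    (dag_dag : ∀ {A B : C} (f : A ⟶ B), dag (dag f) = f)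
    -- the binary biproducts are dagger biproducts
    (dag_fst : ∀ A B : C, dag (biprod.fst : A ⊞ B ⟶ A) ≫ biprod.fst = 𝟙 A)
    (dag_snd : ∀ A B : C, dag (biprod.snd : A ⊞ B ⟶ B) ≫ biprod.snd = 𝟙 B)
    (dag_snd_fst : ∀ A B : C, dag (biprod.snd : A ⊞ B ⟶ B) ≫ biprod.fst = 0)
    (dag_fst_snd : ∀ A B : C, dag (biprod.fst : A ⊞ B ⟶ A) ≫ biprod.snd = 0)
    -- conclusion
    {A B : C} (f g : A ⟶ B) :
    dag (biprod.lift (𝟙 A) (𝟙 A) ≫ biprod.map f g ≫ biprod.desc (𝟙 B) (𝟙 B)) =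
      biprod.lift (𝟙 B) (𝟙 B) ≫ biprod.map (dag f) (dag g) ≫ biprod.desc (𝟙 A) (𝟙 A) := by
  have hinl : ∀ X Y : C, dag (biprod.fst : X ⊞ Y ⟶ X) = biprod.inl := by
    intro X Y
    apply biprod.hom_ext <;> simp [dag_fst, dag_fst_snd]
  have hinr : ∀ X Y : C, dag (biprod.snd : X ⊞ Y ⟶ Y) = biprod.inr := by
    intro X Y
    apply biprod.hom_ext <;> simp [dag_snd, dag_snd_fst]
  have hfst : ∀ X Y : C, dag (biprod.inl : X ⟶ X ⊞ Y) = biprod.fst := by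
    intro X Y; rw [← hinl, dag_dag]
  have hsnd : ∀ X Y : C, dag (biprod.inr : Y ⟶ X ⊞ Y) = biprod.snd := by
    intro X Y; rw [← hinr, dag_dag]
  have hlift : ∀ {X Y Z : C} (u : X ⟶ Y) (v : X ⟶ Z),
      dag (biprod.lift u v) = biprod.desc (dag u) (dag v) := by
    intro X Y Z u v
    apply biprod.hom_ext'
    · rw [biprod.inl_desc, ← hinl, ← dag_comp, biprod.lift_fst]
    · rw [biprod.inr_desc, ← hinr, ← dag_comp, biprod.lift_snd]
  have hdesc : ∀ {X Y Z : C} (u : X ⟶ Z) (v : Y ⟶ Z),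
      dag (biprod.desc u v) = biprod.lift (dag u) (dag v) := by
    intro X Y Z u v
    apply biprod.hom_ext
    · rw [biprod.lift_fst, ← hfst, ← dag_comp, biprod.inl_desc]
    · rw [biprod.lift_snd, ← hsnd, ← dag_comp, biprod.inr_desc]
  have hmap : dag (biprod.map f g) = biprod.map (dag f) (dag g) := by
    rw [show biprod.map f g = biprod.lift (biprod.fst ≫ f) (biprod.snd ≫ g) from by
          ext <;> simp,
        hlift, dag_comp, dag_comp, hinl, hinr]
    ext <;> simp
  rw [dag_comp, dag_comp, hlift, hdesc, dag_id, dag_id, hmap]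
  simp
end

section
/- Let C be a category equipped with a dagger, a zero object, binary dagger biproducts, and dagger equalizers of all parallel pairs, in which every dagger monomorphism is a kernel of some morphism, and let K be a simple object of C which is a generator. Then the scalars have additive inverses: for every λ : K ⟶ K there exists μ : K ⟶ K with λ + μ = 0, where addition of parallel morphisms is defined via the biproduct structure. -/
open CategoryTheory CategoryTheory.Limits CategoryTheory.SemiadditiveOfBinaryBiproducts ZeroObject

attribute [local instance] CategoryTheory.SemiadditiveOfBinaryBiproducts.addCommMonoidHomOfHasBinaryBiproducts

/-- In a dagger category with a zero object, binary dagger biproducts, dagger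
equalizers, in which every dagger monomorphism is a kernel, and which has a simple
generator `K`, the scalars `K ⟶ K` have additive inverses for the biproduct-induced
addition `λ + μ := Δ ≫ (λ ⊞ μ) ≫ ∇`. -/
theorem scalars_have_additive_inverses
    {C : Type*} [Category C] [HasZeroObject C] [HasZeroMorphisms C] [HasBinaryBiproducts C]
    -- the dagger
    (dag : ∀ {A B : C}, (A ⟶ B) → (B ⟶ A))
    (dag_id : ∀ A : C, dag (𝟙 A) = 𝟙 A)
    (dag_comp : ∀ {A B D : C} (f : A ⟶ B) (g : B ⟶ D), dag (f ≫ g) = dag g ≫ dag f)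
    (dag_dag : ∀ {A B : C} (f : A ⟶ B), dag (dag f) = f)
    -- the binary biproducts are dagger biproducts
    (dag_fst : ∀ A B : C, dag (biprod.fst : A ⊞ B ⟶ A) ≫ biprod.fst = 𝟙 A)
    (dag_snd : ∀ A B : C, dag (biprod.snd : A ⊞ B ⟶ B) ≫ biprod.snd = 𝟙 B)
    (dag_snd_fst : ∀ A B : C, dag (biprod.snd : A ⊞ B ⟶ B) ≫ biprod.fst = 0)
    (dag_fst_snd : ∀ A B : C, dag (biprod.fst : A ⊞ B ⟶ A) ≫ biprod.snd = 0)
    -- dagger equalizers of all parallel pairs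
    (dag_eq : ∀ {A B : C} (f g : A ⟶ B), ∃ (E : C) (e : E ⟶ A) (w : e ≫ f = e ≫ g),
      e ≫ dag e = 𝟙 E ∧ Nonempty (IsLimit (Fork.ofι e w)))
    -- every dagger monomorphism is a kernel of some morphism
    (dag_mono_ker : ∀ {A B : C} (m : A ⟶ B), m ≫ dag m = 𝟙 A →
      ∃ (D : C) (h : B ⟶ D) (w : m ≫ h = 0), Nonempty (IsLimit (KernelFork.ofι m w)))
    -- K is a simple object
    (K : C)
    (K_nonzero : ¬ IsZero K)
    (K_simple : ∀ {A : C} (m : A ⟶ K), Mono m → m = 0 ∨ IsIso m)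
    -- K is a generator
    (K_gen : ∀ {A B : C} (f g : A ⟶ B), f ≠ g → ∃ x : K ⟶ A, x ≫ f ≠ x ≫ g)
    -- conclusion
    (lam : K ⟶ K) :
    ∃ mu : K ⟶ K,
      biprod.lift (𝟙 K) (𝟙 K) ≫ biprod.map lam mu ≫ biprod.desc (𝟙 K) (𝟙 K) = 0 := by
  -- the dagger of a zero morphism is zero
  have dag_zero : ∀ {A B : C}, dag (0 : A ⟶ B) = 0 := by
    intro A B
    have h0 : (0 : A ⟶ B) = (0 : A ⟶ (0 : C)) ≫ (0 : (0 : C) ⟶ B) := by simp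
    rw [h0, dag_comp]
    have : dag (0 : (0 : C) ⟶ B) = 0 := (isZero_zero C).eq_zero_of_tgt _
    rw [this, zero_comp]
  -- definiteness: `f ≫ dag f = 0 → f = 0`
  have definite : ∀ {A B : C} (f : A ⟶ B), f ≫ dag f = 0 → f = 0 := by
    intro A B f hf
    obtain ⟨N, k, w, hk, ⟨hl⟩⟩ := dag_eq (dag f) (0 : B ⟶ A)
    obtain ⟨g, hg⟩ := Fork.IsLimit.lift' hl f (by simpa using hf)
    simp only [Fork.ι_ofι] at hg
    have hkf : k ≫ dag f = 0 := by simpa using w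
    have : dag g = 0 := by
      calc dag g = (k ≫ dag k) ≫ dag g := by rw [hk, Category.id_comp]
        _ = k ≫ dag (g ≫ k) := by rw [dag_comp, Category.assoc]
        _ = k ≫ dag f := by rw [hg]
        _ = 0 := hkf
    have hg0 : g = 0 := by rw [← dag_dag g, this, dag_zero]
    rw [← hg, hg0, zero_comp]
  -- decomposition of composition with the codiagonal
  have hsum : ∀ {A : C} (x : A ⟶ K ⊞ K),
      x ≫ biprod.desc (𝟙 K) (𝟙 K) = x ≫ biprod.fst + x ≫ biprod.snd := by
    intro A x
    rw [add_eq_left_addition]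
    congr 1
    apply biprod.hom_ext <;> simp
  -- the dagger kernel of the codiagonal
  obtain ⟨N, e, w, he, ⟨hl⟩⟩ := dag_eq (biprod.desc (𝟙 K) (𝟙 K)) (0 : K ⊞ K ⟶ K)
  have hw : e ≫ biprod.desc (𝟙 K) (𝟙 K) = 0 := by simpa using w
  have emono : Mono e := by
    constructor
    intro A u v huv
    calc u = u ≫ e ≫ dag e := by rw [he, Category.comp_id]
      _ = v ≫ e ≫ dag e := by rw [← Category.assoc, huv, Category.assoc]
      _ = v := by rw [he, Category.comp_id]
  -- `t` is monic, as additive inverses are unique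
  have tmono : Mono (e ≫ biprod.fst) := by
    constructor
    intro A u v huv
    have h1 : (u ≫ e) ≫ biprod.fst + (u ≫ e) ≫ biprod.snd = 0 := by
      rw [← hsum, Category.assoc, hw, comp_zero]
    have h2 : (v ≫ e) ≫ biprod.fst + (v ≫ e) ≫ biprod.snd = 0 := by
      rw [← hsum, Category.assoc, hw, comp_zero]
    have hfst : (u ≫ e) ≫ biprod.fst = (v ≫ e) ≫ biprod.fst := by
      simpa [Category.assoc] using huv
    have hsnd : (u ≫ e) ≫ biprod.snd = (v ≫ e) ≫ biprod.snd := by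
      rw [← hfst] at h2
      calc (u ≫ e) ≫ biprod.snd
          = (u ≫ e) ≫ biprod.snd + ((u ≫ e) ≫ biprod.fst + (v ≫ e) ≫ biprod.snd) := by
            rw [h2, add_zero]
        _ = ((u ≫ e) ≫ biprod.fst + (u ≫ e) ≫ biprod.snd) + (v ≫ e) ≫ biprod.snd := by
            rw [← add_assoc, add_comm ((u ≫ e) ≫ biprod.snd) ((u ≫ e) ≫ biprod.fst)]
        _ = (v ≫ e) ≫ biprod.snd := by rw [h1, zero_add]
    have : u ≫ e = v ≫ e := by
      apply biprod.hom_ext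
      · simpa [Category.assoc] using hfst
      · simpa [Category.assoc] using hsnd
    exact emono.right_cancellation u v this
  rcases K_simple (e ≫ biprod.fst) tmono with ht | ht
  · -- degenerate case: contradiction
    exfalso
    -- first, `e = 0`
    have hesnd : e ≫ biprod.snd = 0 := by
      have := hsum e
      rw [hw, ht, zero_add] at this
      exact this.symm
    have he0 : e = 0 := by
      apply biprod.hom_ext <;> simp [ht, hesnd]
    -- so the kernel of the codiagonal is trivial
    have degen : ∀ {A : C} (x : A ⟶ K ⊞ K), x ≫ biprod.desc (𝟙 K) (𝟙 K) = 0 → x = 0 := by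
      intro A x hx
      obtain ⟨g, hg⟩ := Fork.IsLimit.lift' hl x (by simpa using hx)
      simp only [Fork.ι_ofι] at hg
      apply biprod.hom_ext
      · rw [← hg, Category.assoc, ht, comp_zero, zero_comp]
      · rw [← hg, Category.assoc, hesnd, comp_zero, zero_comp]
    -- scalar-level consequence: zero sums have zero summands
    have degen' : ∀ {A : C} (a b : A ⟶ K), a + b = 0 → a = 0 := by
      intro A a b hab
      have hx : biprod.lift a b ≫ biprod.desc (𝟙 K) (𝟙 K) = 0 := by
        rw [hsum]; simpa using hab
      have := degen _ hx
      calc a = biprod.lift a b ≫ biprod.fst := by simp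
        _ = 0 := by rw [this, zero_comp]
    -- the dagger equalizer of the two projections, and a morphism it is a kernel of
    obtain ⟨N₂, e₂, w₂, he₂, ⟨hl₂⟩⟩ := dag_eq (biprod.fst : K ⊞ K ⟶ K) biprod.snd
    obtain ⟨D, h, wh, ⟨hk⟩⟩ := dag_mono_ker e₂ he₂
    -- the diagonal factors through `e₂`, hence is killed by `h`
    obtain ⟨d, hd⟩ := Fork.IsLimit.lift' hl₂ (biprod.lift (𝟙 K) (𝟙 K)) (by simp)
    simp only [Fork.ι_ofι] at hd
    have hΔh : biprod.lift (𝟙 K) (𝟙 K) ≫ h = 0 := by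
      rw [← hd, Category.assoc, wh, comp_zero]
    -- the diagonal is the sum of the two injections
    have hdiag : (biprod.inl : K ⟶ K ⊞ K) + biprod.inr = biprod.lift (𝟙 K) (𝟙 K) := by
      apply biprod.hom_ext <;> simp [add_comp]
    have hsum2 : biprod.inl ≫ h + biprod.inr ≫ h = 0 := by
      rw [← add_comp, hdiag, hΔh]
    -- `inl ≫ h` is nonzero, since `inl` does not factor through `e₂`
    have hinl : (biprod.inl : K ⟶ K ⊞ K) ≫ h ≠ 0 := by
      intro h0
      obtain ⟨g, hg⟩ := KernelFork.IsLimit.lift' hk biprod.inl h0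
      simp only [Fork.ι_ofι] at hg
      have : (biprod.inl : K ⟶ K ⊞ K) ≫ biprod.fst = biprod.inl ≫ biprod.snd := by
        rw [← hg, Category.assoc, Category.assoc, w₂]
      simp only [biprod.inl_fst, biprod.inl_snd] at this
      exact K_nonzero ((IsZero.iff_id_eq_zero K).2 this)
    -- but `inl ≫ h` is zero by definiteness
    apply hinl
    have : (biprod.inl ≫ h) ≫ dag (biprod.inl ≫ h) + (biprod.inr ≫ h) ≫ dag (biprod.inl ≫ h)
        = 0 := by
      rw [← add_comp, hsum2, zero_comp]
    exact definite _ (degen' _ _ this)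
  · -- main case: the first projection restricted to the kernel is invertible
    have := ht
    refine ⟨lam ≫ inv (e ≫ biprod.fst) ≫ e ≫ biprod.snd, ?_⟩
    have h1 : biprod.lift (𝟙 K) (𝟙 K) ≫
        biprod.map lam (lam ≫ inv (e ≫ biprod.fst) ≫ e ≫ biprod.snd)
        = lam ≫ inv (e ≫ biprod.fst) ≫ e := by
      apply biprod.hom_ext
      · simp only [Category.assoc, biprod.map_fst, biprod.lift_fst_assoc,
          Category.id_comp, IsIso.inv_hom_id, Category.comp_id]
      · simp
    rw [← Category.assoc, h1, Category.assoc, Category.assoc, hw, comp_zero, comp_zero]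
end

section
/- Let C be a category equipped with a dagger, a zero object, binary dagger biproducts, and dagger equalizers of all parallel pairs, in which every dagger monomorphism is a kernel of some morphism, and let K be a simple object of C which is a generator. Let m : M ⟶ H be a dagger monomorphism and let m⊥ : M⊥ ⟶ H be a kernel of m† which is a dagger monomorphism. Then m and m⊥ exhibit H as a dagger biproduct of M and M⊥; in particular (m† ≫ m) + (m⊥† ≫ m⊥) = 𝟙 H, where addition of parallel morphisms is defined via the biproduct structure. -/
/-!
Write `S = m† ≫ m + m⊥† ≫ m⊥`, the sum taken in the commutative monoid structure that binary
biproducts put on hom-sets. Then `m ≫ S = m` and `m⊥ ≫ S = m⊥`, and a bicone whose projections and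
injections sum to the identity is a biproduct, so it suffices that `m` and `m⊥` are jointly epic.
Given `f, g` agreeing on both, their dagger equalizer `e` is a kernel of some `h`, and `m`, `m⊥`
factor through `e`, so both kill `h`. As `h† ≫ m† = 0`, `h†` factors through `m⊥`, whence
`h = m⊥† ≫ m⊥ ≫ h = 0`. So `e` is the kernel of a zero map, an isomorphism, and `f = g`.
-/

open CategoryTheory CategoryTheory.Limits

attribute [local instance] SemiadditiveOfBinaryBiproducts.addCommMonoidHomOfHasBinaryBiproducts

namespace CategoryTheory

namespace SemiadditiveOfBinaryBiproducts

variable {C : Type*} [Category C] [HasZeroMorphisms C] [HasBinaryBiproducts C]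

theorem add_eq_lift_map_desc {X Y : C} (f g : X ⟶ Y) :
    f + g = biprod.lift (𝟙 X) (𝟙 X) ≫ biprod.map f g ≫ biprod.desc (𝟙 Y) (𝟙 Y) := by
  have : biprod.lift (𝟙 X) (𝟙 X) ≫ biprod.map f g = biprod.lift f g := by ext <;> simp
  rw [add_eq_left_addition, reassoc_of% this]

noncomputable def isBinaryBilimitOfTotal {X Y : C} (b : BinaryBicone X Y)
    (total : b.fst ≫ b.inl + b.snd ≫ b.inr = 𝟙 b.pt) : b.IsBilimit where
  isLimit := BinaryFan.IsLimit.mk b.toCone (fun f g => f ≫ b.inl + g ≫ b.inr)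
    (fun f g => by simp [add_comp])
    (fun f g => by simp [add_comp])
    (fun f g (k : _ ⟶ b.pt) (hfst : k ≫ b.fst = f) (hsnd : k ≫ b.snd = g) => by
      rw [← hfst, ← hsnd, Category.assoc, Category.assoc, ← comp_add, total, Category.comp_id])
  isColimit := BinaryCofan.IsColimit.mk b.toCocone (fun f g => b.fst ≫ f + b.snd ≫ g)
    (fun f g => by simp [comp_add])
    (fun f g => by simp [comp_add])
    (fun f g (k : b.pt ⟶ _) (hinl : b.inl ≫ k = f) (hinr : b.inr ≫ k = g) => by
      rw [← hinl, ← hinr, ← Category.assoc, ← Category.assoc, ← add_comp, total, Category.id_comp])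

end SemiadditiveOfBinaryBiproducts

class DaggerCategory (C : Type*) [Category C] where
  dagger : ∀ {X Y : C}, (X ⟶ Y) → (Y ⟶ X)
  dagger_comp : ∀ {X Y Z : C} (f : X ⟶ Y) (g : Y ⟶ Z), dagger (f ≫ g) = dagger g ≫ dagger f
  dagger_dagger : ∀ {X Y : C} (f : X ⟶ Y), dagger (dagger f) = f

postfix:max "†" => DaggerCategory.dagger

namespace DaggerCategory

variable {C : Type*} [Category C] [DaggerCategory C]

def IsDaggerMono {X Y : C} (f : X ⟶ Y) : Prop := f ≫ f† = 𝟙 X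

variable (C) in
def HasDaggerEqualizers : Prop :=
  ∀ {X Y : C} (f g : X ⟶ Y), ∃ (E : C) (e : E ⟶ X) (w : e ≫ f = e ≫ g),
    IsDaggerMono e ∧ Nonempty (IsLimit (Fork.ofι e w))

variable [HasZeroMorphisms C]

variable (C) in
def DaggerMonosAreKernels : Prop :=
  ∀ {X Y : C} (e : X ⟶ Y), IsDaggerMono e →
    ∃ (D : C) (h : Y ⟶ D) (w : e ≫ h = 0), Nonempty (IsLimit (KernelFork.ofι e w))

@[simp]
theorem dagger_zero {X Y : C} : (0 : X ⟶ Y)† = 0 :=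
  calc (0 : X ⟶ Y)† = ((0 : X ⟶ Y) ≫ (0 : Y ⟶ Y)†)† := by rw [zero_comp]
    _ = 0 := by rw [dagger_comp, dagger_dagger, zero_comp]

theorem comp_dagger_eq_zero_comm {X Y Z : C} {f : X ⟶ Z} {g : Y ⟶ Z} :
    f ≫ g† = 0 ↔ g ≫ f† = 0 := by
  constructor <;> intro h <;> simpa [dagger_comp, dagger_dagger] using congrArg dagger h

section Orthocomplement

variable {M Mperp H : C} {m : M ⟶ H} {mperp : Mperp ⟶ H} {wperp : mperp ≫ m† = 0}

theorem dagger_comp_comp_eq_of_comp_eq_zero (hker : IsLimit (KernelFork.ofι mperp wperp))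
    (hmperp : IsDaggerMono mperp) {D : C} {h : H ⟶ D} (hh : m ≫ h = 0) :
    mperp† ≫ mperp ≫ h = h := by
  -- `h†` is killed by `m†`, so it factors through the kernel `mperp`
  obtain ⟨u, hu⟩ := KernelFork.IsLimit.lift' hker h† (by rw [← dagger_comp, hh, dagger_zero])
  have hu' : h = mperp† ≫ u† := by simpa [dagger_comp, dagger_dagger] using congrArg dagger hu.symm
  rw [hu', reassoc_of% hmperp]

theorem eq_zero_of_comp_eq_zero_of_comp_eq_zero (hker : IsLimit (KernelFork.ofι mperp wperp))
    (hmperp : IsDaggerMono mperp) {D : C} {h : H ⟶ D} (hm : m ≫ h = 0) (hp : mperp ≫ h = 0) :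
    h = 0 := by
  rw [← dagger_comp_comp_eq_of_comp_eq_zero hker hmperp hm, hp, comp_zero]

theorem eq_of_comp_eq_of_comp_eq
    (hEq : HasDaggerEqualizers C) (hKer : DaggerMonosAreKernels C)
    (hker : IsLimit (KernelFork.ofι mperp wperp)) (hmperp : IsDaggerMono mperp)
    {D : C} {f g : H ⟶ D} (hm : m ≫ f = m ≫ g) (hp : mperp ≫ f = mperp ≫ g) : f = g := by
  obtain ⟨E, e, w, he, ⟨hE⟩⟩ := hEq f g
  obtain ⟨D', h, wh, ⟨hK⟩⟩ := hKer e he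
  obtain ⟨a, ha⟩ := Fork.IsLimit.lift' hE m hm
  obtain ⟨b, hb⟩ := Fork.IsLimit.lift' hE mperp hp
  have h0 : h = 0 := eq_zero_of_comp_eq_zero_of_comp_eq_zero hker hmperp
    (by rw [← ha, Fork.ι_ofι, Category.assoc, wh, comp_zero])
    (by rw [← hb, Fork.ι_ofι, Category.assoc, wh, comp_zero])
  have : IsIso e := KernelFork.IsLimit.isIso_ι _ hK h0
  exact (cancel_epi e).1 w

theorem dagger_comp_add_dagger_comp_eq_id [HasBinaryBiproducts C]
    (hEq : HasDaggerEqualizers C) (hKer : DaggerMonosAreKernels C)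
    (hm : IsDaggerMono m) (hker : IsLimit (KernelFork.ofι mperp wperp))
    (hmperp : IsDaggerMono mperp) :
    m† ≫ m + mperp† ≫ mperp = 𝟙 H := by
  have hperp : m ≫ mperp† = 0 := comp_dagger_eq_zero_comm.mpr wperp
  apply eq_of_comp_eq_of_comp_eq hEq hKer hker hmperp
  · rw [SemiadditiveOfBinaryBiproducts.comp_add, reassoc_of% hm, reassoc_of% hperp, zero_comp,
      add_zero, Category.comp_id]
  · rw [SemiadditiveOfBinaryBiproducts.comp_add, reassoc_of% wperp, reassoc_of% hmperp, zero_comp,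
      zero_add, Category.comp_id]

end Orthocomplement

end DaggerCategory

end CategoryTheory

theorem daggerMono_orthocomplement_biproduct_general
    {C : Type*} [Category C] [HasZeroMorphisms C] [HasBinaryBiproducts C]
    -- the dagger
    (dag : ∀ {A B : C}, (A ⟶ B) → (B ⟶ A))
    (dag_comp : ∀ {A B D : C} (f : A ⟶ B) (g : B ⟶ D), dag (f ≫ g) = dag g ≫ dag f)
    (dag_dag : ∀ {A B : C} (f : A ⟶ B), dag (dag f) = f)
    -- dagger equalizers of all parallel pairs
    (dag_eq : ∀ {A B : C} (f g : A ⟶ B), ∃ (E : C) (e : E ⟶ A) (w : e ≫ f = e ≫ g),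
      e ≫ dag e = 𝟙 E ∧ Nonempty (IsLimit (Fork.ofι e w)))
    -- every dagger monomorphism is a kernel of some morphism
    (dag_mono_ker : ∀ {A B : C} (m : A ⟶ B), m ≫ dag m = 𝟙 A →
      ∃ (D : C) (h : B ⟶ D) (w : m ≫ h = 0), Nonempty (IsLimit (KernelFork.ofι m w)))
    -- a dagger monomorphism m and a dagger-monomorphic kernel m⊥ of m†
    {M Mperp H : C} (m : M ⟶ H) (hm : m ≫ dag m = 𝟙 M)
    (mperp : Mperp ⟶ H) (hmperp : mperp ≫ dag mperp = 𝟙 Mperp)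
    (wperp : mperp ≫ dag m = 0)
    (hker : Nonempty (IsLimit (KernelFork.ofι mperp wperp))) :
    ∃ (h1 : m ≫ dag mperp = 0),
      Nonempty (BinaryBicone.IsBilimit
        { pt := H
          fst := dag m
          snd := dag mperp
          inl := m
          inr := mperp
          inl_fst := hm
          inl_snd := h1
          inr_fst := wperp
          inr_snd := hmperp }) ∧
      biprod.lift (𝟙 H) (𝟙 H) ≫ biprod.map (dag m ≫ m) (dag mperp ≫ mperp) ≫
        biprod.desc (𝟙 H) (𝟙 H) = 𝟙 H := by
  let _ : DaggerCategory C := ⟨dag, dag_comp, dag_dag⟩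
  have total : m† ≫ m + mperp† ≫ mperp = 𝟙 H :=
    DaggerCategory.dagger_comp_add_dagger_comp_eq_id @dag_eq @dag_mono_ker hm hker.some hmperp
  refine ⟨DaggerCategory.comp_dagger_eq_zero_comm.mpr wperp,
    ⟨SemiadditiveOfBinaryBiproducts.isBinaryBilimitOfTotal _ total⟩, ?_⟩
  rw [← SemiadditiveOfBinaryBiproducts.add_eq_lift_map_desc]
  exact total

/-- In a dagger category with a zero object, binary dagger biproducts, dagger
equalizers, every dagger monomorphism a kernel, and a simple generator `K`: a dagger
monomorphism `m : M ⟶ H` together with a dagger-monomorphic kernel `m⊥ : M⊥ ⟶ H` of `m†`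
exhibits `H` as a dagger biproduct of `M` and `M⊥`; in particular
`(m† ≫ m) + (m⊥† ≫ m⊥) = 𝟙 H` for the biproduct-induced addition. -/
theorem daggerMono_orthocomplement_biproduct
    {C : Type*} [Category C] [HasZeroObject C] [HasZeroMorphisms C] [HasBinaryBiproducts C]
    -- the dagger
    (dag : ∀ {A B : C}, (A ⟶ B) → (B ⟶ A))
    (dag_id : ∀ A : C, dag (𝟙 A) = 𝟙 A)
    (dag_comp : ∀ {A B D : C} (f : A ⟶ B) (g : B ⟶ D), dag (f ≫ g) = dag g ≫ dag f)
    (dag_dag : ∀ {A B : C} (f : A ⟶ B), dag (dag f) = f)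
    -- the binary biproducts are dagger biproducts
    (dag_fst : ∀ A B : C, dag (biprod.fst : A ⊞ B ⟶ A) ≫ biprod.fst = 𝟙 A)
    (dag_snd : ∀ A B : C, dag (biprod.snd : A ⊞ B ⟶ B) ≫ biprod.snd = 𝟙 B)
    (dag_snd_fst : ∀ A B : C, dag (biprod.snd : A ⊞ B ⟶ B) ≫ biprod.fst = 0)
    (dag_fst_snd : ∀ A B : C, dag (biprod.fst : A ⊞ B ⟶ A) ≫ biprod.snd = 0)
    -- dagger equalizers of all parallel pairs
    (dag_eq : ∀ {A B : C} (f g : A ⟶ B), ∃ (E : C) (e : E ⟶ A) (w : e ≫ f = e ≫ g),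
      e ≫ dag e = 𝟙 E ∧ Nonempty (IsLimit (Fork.ofι e w)))
    -- every dagger monomorphism is a kernel of some morphism
    (dag_mono_ker : ∀ {A B : C} (m : A ⟶ B), m ≫ dag m = 𝟙 A →
      ∃ (D : C) (h : B ⟶ D) (w : m ≫ h = 0), Nonempty (IsLimit (KernelFork.ofι m w)))
    -- K is a simple object which is a generator
    (K : C)
    (K_nonzero : ¬ IsZero K)
    (K_simple : ∀ {A : C} (m : A ⟶ K), Mono m → m = 0 ∨ IsIso m)
    (K_gen : ∀ {A B : C} (f g : A ⟶ B), f ≠ g → ∃ x : K ⟶ A, x ≫ f ≠ x ≫ g)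
    -- a dagger monomorphism m and a dagger-monomorphic kernel m⊥ of m†
    {M Mperp H : C} (m : M ⟶ H) (hm : m ≫ dag m = 𝟙 M)
    (mperp : Mperp ⟶ H) (hmperp : mperp ≫ dag mperp = 𝟙 Mperp)
    (wperp : mperp ≫ dag m = 0)
    (hker : Nonempty (IsLimit (KernelFork.ofι mperp wperp))) :
    ∃ (h1 : m ≫ dag mperp = 0),
      Nonempty (BinaryBicone.IsBilimit
        { pt := H
          fst := dag m
          snd := dag mperp
          inl := m
          inr := mperp
          inl_fst := hm
          inl_snd := h1
          inr_fst := wperp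
          inr_snd := hmperp }) ∧
      biprod.lift (𝟙 H) (𝟙 H) ≫ biprod.map (dag m ≫ m) (dag mperp ≫ mperp) ≫
        biprod.desc (𝟙 H) (𝟙 H) = 𝟙 H :=
  daggerMono_orthocomplement_biproduct_general dag dag_comp dag_dag dag_eq dag_mono_ker m hm mperp
    hmperp wperp hker
end

section
/- Let H be a complex Hilbert space and let T : H →L[ℂ] H be a bounded linear operator. Then T is a linear combination of four unitary operators: there exist complex scalars c₀, c₁, c₂, c₃ and unitary operators U₀, U₁, U₂, U₃ on H such that T = c₀ • U₀ + c₁ • U₁ + c₂ • U₂ + c₃ • U₃. -/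
/-- every bounded operator on a complex Hilbert space is a linear
combination of four unitary operators. -/
theorem bounded_op_linear_combination_of_four_unitaries
    {H : Type*} [NormedAddCommGroup H] [InnerProductSpace ℂ H] [CompleteSpace H]
    (T : H →L[ℂ] H) :
    ∃ (c₀ c₁ c₂ c₃ : ℂ) (U₀ U₁ U₂ U₃ : H →L[ℂ] H),
      U₀ ∈ unitary (H →L[ℂ] H) ∧ U₁ ∈ unitary (H →L[ℂ] H) ∧
      U₂ ∈ unitary (H →L[ℂ] H) ∧ U₃ ∈ unitary (H →L[ℂ] H) ∧
      T = c₀ • U₀ + c₁ • U₁ + c₂ • U₂ + c₃ • U₃ := by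
  obtain ⟨u, c, hT, -⟩ := CStarAlgebra.exists_sum_four_unitary T
  exact ⟨c 0, c 1, c 2, c 3, u 0, u 1, u 2, u 3, (u 0).2, (u 1).2, (u 2).2, (u 3).2,
    by rw [hT, Fin.sum_univ_four]⟩
end

section
/- Let H be an infinite-dimensional real Hilbert space and let T : H →L[ℝ] H be a bounded linear operator. Then T is a finite real linear combination of orthogonal (unitary) operators: there exist n ∈ ℕ, real scalars c : Fin n → ℝ, and orthogonal operators U : Fin n → (H →L[ℝ] H) such that T = ∑ i, c i • U i. -/
/-!
A Hilbert basis of `H` is infinite, so it can be indexed by `w ⊕ w`; this gives orthogonal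
operators `J`, `C` with `J² = -1`, `C² = 1` and `CJ = -JC`. Every `T` splits as `P + Q` with
`P = (T - JTJ)/2` commuting with `J` and `Q = (T + JTJ)/2` anticommuting with it, so that
`Q = C (C Q)` with `C Q` commuting with `J`. An operator commuting with `J` is `a + J c` with `a`,
`c` self-adjoint and commuting with `J`, and a self-adjoint contraction `x` commuting with `J` is
the average of the orthogonal operators `x ± J √(1 - x²)`.
-/

section Ring

variable {R : Type*} [Ring R] [StarRing R]

lemma star_eq_neg_of_mul_self_eq_neg_one {J : R} (hJ : J ∈ unitary R) (hJ2 : J * J = -1) :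
    star J = -J := by
  calc star J = star J * J * -J := by rw [mul_assoc, mul_neg, hJ2, neg_neg, mul_one]
    _ = -J := by rw [Unitary.star_mul_self_of_mem hJ, one_mul]

lemma add_mem_unitary_of_commute {a b : R} (ha : IsSelfAdjoint a) (hb : star b = -b)
    (hab : Commute a b) (h : a * a - b * b = 1) : a + b ∈ unitary R := by
  have hstar : star (a + b) = a - b := by rw [star_add, ha.star_eq, hb, sub_eq_add_neg]
  refine Unitary.mem_iff.mpr ⟨?_, ?_⟩ <;> rw [hstar]
  · calc (a - b) * (a + b) = a * a - b * b + (a * b - b * a) := by noncomm_ring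
      _ = 1 := by rw [hab.eq, sub_self, add_zero, h]
  · calc (a + b) * (a - b) = a * a - b * b + (b * a - a * b) := by noncomm_ring
      _ = 1 := by rw [hab.eq, sub_self, add_zero, h]

end Ring

section NormedAlgebra

variable {A : Type*} [NormedRing A] [NormedAlgebra ℝ A] [StarRing A]

variable (A) in
noncomputable def unitarySpan : Submodule ℝ A := Submodule.span ℝ (unitary A : Set A)

lemma mem_unitarySpan_of_mem_unitary {u : A} (hu : u ∈ unitary A) : u ∈ unitarySpan A :=
  Submodule.subset_span hu

lemma mul_mem_unitarySpan {u x : A} (hu : u ∈ unitary A) (hx : x ∈ unitarySpan A) :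
    u * x ∈ unitarySpan A := by
  simpa only [unitarySpan, Submodule.span_mul_span, Submonoid.coe_mul_self_eq] using
    Submodule.mul_mem_mul (Submodule.subset_span hu) hx

/-- Banach fixed point for `y ↦ (x + y²) / 2`; then `s = 1 - y`. -/
theorem exists_sqrt_one_sub [StarModule ℝ A] [CompleteSpace A] [ContinuousStar A] {x : A}
    (S : Set A) (hx : IsSelfAdjoint x) (hxS : x ∈ Subalgebra.centralizer ℝ S)
    (hxn : ‖x‖ ≤ 1 / 2) :
    ∃ s : A, IsSelfAdjoint s ∧ s ∈ Subalgebra.centralizer ℝ S ∧ s * s = 1 - x := by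
  set f : A → A := fun y => (1 / 2 : ℝ) • (x + y * y)
  set D : Set A := {y | ‖y‖ ≤ 1 / 2 ∧ IsSelfAdjoint y ∧ y ∈ Subalgebra.centralizer ℝ S}
  have hD : IsClosed D :=
    (isClosed_le continuous_norm continuous_const).inter <|
      (isClosed_eq continuous_star continuous_id).inter <| by
        simpa only [Subalgebra.coe_centralizer] using Set.isClosed_centralizer S
  have hfD : Set.MapsTo f D D := by
    rintro y ⟨hyn, hy, hyS⟩
    refine ⟨?_, ?_, ?_⟩
    · calc ‖f y‖ ≤ 1 / 2 * (‖x‖ + ‖y‖ * ‖y‖) := by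
            grw [norm_smul, norm_add_le, norm_mul_le]; norm_num
        _ ≤ 1 / 2 := by nlinarith [norm_nonneg y]
    · have hyy : IsSelfAdjoint (y * y) := by simpa [sq] using hy.pow 2
      exact (IsSelfAdjoint.all _).smul (hx.add hyy)
    · exact Subalgebra.smul_mem _ (add_mem hxS (mul_mem hyS hyS)) _
  have hf : ContractingWith (1 / 2) (hfD.restrict f D D) := by
    refine ⟨by norm_num, LipschitzWith.of_dist_le_mul fun ⟨y, hy⟩ ⟨z, hz⟩ => ?_⟩
    simp only [Subtype.dist_eq, Set.MapsTo.val_restrict_apply, dist_eq_norm]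
    have hsub : f y - f z = (1 / 2 : ℝ) • (y * (y - z) + (y - z) * z) := by
      simp only [f, ← smul_sub]; congr 1; noncomm_ring
    calc ‖f y - f z‖ ≤ 1 / 2 * (‖y‖ * ‖y - z‖ + ‖y - z‖ * ‖z‖) := by
          grw [hsub, norm_smul, norm_add_le, norm_mul_le, norm_mul_le]; norm_num
      _ ≤ _ := by push_cast; nlinarith [hy.1, hz.1, norm_nonneg (y - z)]
  obtain ⟨z, ⟨-, hz, hzS⟩, hfz, -⟩ := hf.exists_fixedPoint' hD.isComplete hfD
    (x := 0) ⟨by simp, .zero _, zero_mem _⟩ (edist_ne_top _ _)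
  refine ⟨1 - z, (IsSelfAdjoint.one A).sub hz, sub_mem (one_mem _) hzS, ?_⟩
  have h2 : (2 : ℝ) • z = x + z * z := by
    conv_lhs => rw [← hfz.eq]
    simp only [f, smul_smul]; norm_num
  calc (1 - z) * (1 - z) = 1 - (2 : ℝ) • z + z * z := by rw [two_smul]; noncomm_ring
    _ = 1 - x := by rw [h2]; abel

section CompleteSpace

variable [StarModule ℝ A] [CompleteSpace A] [ContinuousStar A] {J : A}

lemma mem_unitarySpan_of_isSelfAdjoint_of_norm_le (hJ : J ∈ unitary A) (hJ2 : J * J = -1)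
    {x : A} (hx : IsSelfAdjoint x) (hxJ : Commute x J) (hxn : ‖x‖ ≤ 1 / 2) :
    x ∈ unitarySpan A := by
  have hxx : x * x ∈ Subalgebra.centralizer ℝ {x, J} := by
    rw [Subalgebra.mem_centralizer_iff]
    rintro g (rfl | rfl)
    exacts [((Commute.refl g).mul_right (Commute.refl g)).eq, (hxJ.mul_left hxJ).symm.eq]
  obtain ⟨s, hs, hsc, hss⟩ := exists_sqrt_one_sub {x, J} (by simpa [sq] using hx.pow 2) hxx
    (by grw [norm_mul_le]; nlinarith [norm_nonneg x])
  rw [Subalgebra.mem_centralizer_iff] at hsc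
  have hxs : Commute x s := hsc x (by simp)
  have hsJ : Commute s J := (hsc J (by simp)).symm
  have hU : x + J * s ∈ unitary A := by
    refine add_mem_unitary_of_commute hx ?_ (hxJ.mul_right hxs) ?_
    · rw [star_mul, hs.star_eq, star_eq_neg_of_mul_self_eq_neg_one hJ hJ2, mul_neg, hsJ.eq]
    · rw [hsJ.mul_mul_mul_comm, hJ2, hss]; noncomm_ring
  have hstar : star (x + J * s) = x - J * s := by
    rw [star_add, star_mul, hx.star_eq, hs.star_eq, star_eq_neg_of_mul_self_eq_neg_one hJ hJ2,
      mul_neg, hsJ.eq, sub_eq_add_neg]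
  have hxU : x = (1 / 2 : ℝ) • ((x + J * s) + star (x + J * s)) := by rw [hstar]; module
  rw [hxU]
  exact Submodule.smul_mem _ _ (add_mem (mem_unitarySpan_of_mem_unitary hU)
    (mem_unitarySpan_of_mem_unitary (Unitary.star_mem hU)))

lemma mem_unitarySpan_of_isSelfAdjoint (hJ : J ∈ unitary A) (hJ2 : J * J = -1)
    {x : A} (hx : IsSelfAdjoint x) (hxJ : Commute x J) : x ∈ unitarySpan A := by
  set c : ℝ := (2 * ‖x‖ + 1)⁻¹
  have hc : 0 < c := by positivity
  refine (Submodule.smul_mem_iff _ hc.ne').mp <|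
    mem_unitarySpan_of_isSelfAdjoint_of_norm_le hJ hJ2 ((IsSelfAdjoint.all c).smul hx)
      (hxJ.smul_left c) ?_
  rw [norm_smul, Real.norm_of_nonneg hc.le, inv_mul_le_iff₀ (by positivity)]
  linarith [norm_nonneg x]

lemma mem_unitarySpan_of_commute (hJ : J ∈ unitary A) (hJ2 : J * J = -1) {P : A}
    (hPJ : Commute P J) : P ∈ unitarySpan A := by
  have hJs := star_eq_neg_of_mul_self_eq_neg_one hJ hJ2
  have hPJ' : Commute (star P) J := by simpa [hJs] using hPJ.star_star
  set b : A := (1 / 2 : ℝ) • (P - star P)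
  have hbJ : Commute b J := (hPJ.sub_left hPJ').smul_left _
  have hJb : IsSelfAdjoint (J * b) := by
    rw [IsSelfAdjoint, star_mul, hJs, star_smul, star_sub, star_star, star_trivial, mul_neg,
      ← neg_mul, ← smul_neg, neg_sub, hbJ.eq]
  have hP : P = (1 / 2 : ℝ) • (P + star P) + star J * (J * b) := by
    rw [← mul_assoc, Unitary.star_mul_self_of_mem hJ, one_mul]; module
  rw [hP]
  refine add_mem (mem_unitarySpan_of_isSelfAdjoint hJ hJ2 ?_ ?_) (mul_mem_unitarySpan
    (Unitary.star_mem hJ) (mem_unitarySpan_of_isSelfAdjoint hJ hJ2 hJb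
      ((Commute.refl J).mul_left hbJ)))
  · rw [IsSelfAdjoint, star_smul, star_add, star_star, star_trivial, add_comm]
  · exact (hPJ.add_left hPJ').smul_left _

theorem unitarySpan_eq_top {J C : A} (hJ : J ∈ unitary A) (hJ2 : J * J = -1)
    (hC : C ∈ unitary A) (hC2 : C * C = 1) (hCJ : C * J = -(J * C)) : unitarySpan A = ⊤ := by
  refine eq_top_iff.mpr fun T _ => ?_
  have e1 : J * T * J * J = -(J * T) := by rw [mul_assoc, hJ2, mul_neg_one]
  have e2 : J * (J * T * J) = -(T * J) := by
    rw [← mul_assoc, ← mul_assoc, hJ2, neg_one_mul, neg_mul]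
  set P : A := (1 / 2 : ℝ) • (T - J * T * J)
  set Q : A := (1 / 2 : ℝ) • (T + J * T * J)
  have hPJ : Commute P J := by
    simp only [Commute, SemiconjBy, P, sub_mul, mul_sub, smul_mul_assoc, mul_smul_comm, e1, e2]
    rw [sub_neg_eq_add, sub_neg_eq_add, add_comm]
  have hQJ : Q * J = -(J * Q) := by
    simp only [Q, add_mul, mul_add, smul_mul_assoc, mul_smul_comm, e1, e2]
    module
  have hCQJ : Commute (C * Q) J := by
    calc C * Q * J = -(C * J) * Q := by rw [mul_assoc, hQJ]; noncomm_ring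
      _ = J * (C * Q) := by rw [hCJ, neg_neg, mul_assoc]
  have hT : T = P + C * (C * Q) := by rw [← mul_assoc, hC2, one_mul]; module
  rw [hT]
  exact add_mem (mem_unitarySpan_of_commute hJ hJ2 hPJ)
    (mul_mem_unitarySpan hC (mem_unitarySpan_of_commute hJ hJ2 hCQJ))

end CompleteSpace

end NormedAlgebra

section InnerProductSpace

variable {ι ι' 𝕜 E F : Type*} [RCLike 𝕜] [NormedAddCommGroup E] [InnerProductSpace 𝕜 E]
  [NormedAddCommGroup F] [InnerProductSpace 𝕜 F]

lemma Orthonormal.smul_of_norm_eq_one {v : ι → E} (hv : Orthonormal 𝕜 v) {w : ι → 𝕜}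
    (hw : ∀ i, ‖w i‖ = 1) : Orthonormal 𝕜 fun i => w i • v i := by
  refine ⟨fun i => by rw [norm_smul, hw, hv.1, one_mul], fun i j hij => ?_⟩
  simp only [inner_smul_left, inner_smul_right, hv.2 hij, mul_zero]

namespace HilbertBasis

lemma continuousLinearMap_ext (b : HilbertBasis ι 𝕜 E) {f g : E →L[𝕜] F}
    (h : ∀ i, f (b i) = g (b i)) : f = g :=
  ContinuousLinearMap.ext_on (Submodule.dense_iff_topologicalClosure_eq_top.mpr b.dense_span)
    (Set.forall_mem_range.mpr h)

lemma infinite_of_not_finiteDimensional (b : HilbertBasis ι 𝕜 E)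
    (hE : ¬FiniteDimensional 𝕜 E) : Infinite ι := by
  refine not_finite_iff_infinite.mp fun _ => hE ?_
  have := Fintype.ofFinite ι
  exact Module.Finite.of_basis b.toOrthonormalBasis.toBasis

noncomputable def equiv (b : HilbertBasis ι 𝕜 E) (b' : HilbertBasis ι 𝕜 F) :
    E ≃ₗᵢ[𝕜] F :=
  b.repr.trans b'.repr.symm

@[simp]
lemma equiv_apply_self (b : HilbertBasis ι 𝕜 E) (b' : HilbertBasis ι 𝕜 F) (i : ι) :
    b.equiv b' (b i) = b' i := by
  classical
  rw [equiv, LinearIsometryEquiv.trans_apply, b.repr_self, b'.repr_symm_single]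

variable [CompleteSpace E]

noncomputable def reindexSMul (b : HilbertBasis ι 𝕜 E) (e : ι' ≃ ι) (w : ι' → 𝕜)
    (hw : ∀ i, ‖w i‖ = 1) : HilbertBasis ι' 𝕜 E :=
  HilbertBasis.mk (v := fun i => w i • b (e i))
    ((b.orthonormal.comp e e.injective).smul_of_norm_eq_one hw) <| by
    have hspan : Submodule.span 𝕜 (Set.range fun i => w i • b (e i)) =
        Submodule.span 𝕜 (Set.range b) := by
      refine Submodule.span_eq_span ?_ ?_ <;> rintro _ ⟨i, rfl⟩
      · exact Submodule.smul_mem _ _ (Submodule.subset_span ⟨e i, rfl⟩)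
      · have hw0 : w (e.symm i) ≠ 0 := norm_ne_zero_iff.mp (by rw [hw]; exact one_ne_zero)
        have : b i = (w (e.symm i))⁻¹ • (w (e.symm i) • b (e (e.symm i))) := by
          rw [smul_smul, inv_mul_cancel₀ hw0, one_smul, e.apply_symm_apply]
        rw [this]
        exact Submodule.smul_mem _ _ (Submodule.subset_span ⟨e.symm i, rfl⟩)
    rw [hspan, b.dense_span]

@[simp]
lemma reindexSMul_apply (b : HilbertBasis ι 𝕜 E) (e : ι' ≃ ι) (w : ι' → 𝕜)
    (hw : ∀ i, ‖w i‖ = 1) (i : ι') : b.reindexSMul e w hw i = w i • b (e i) := by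
  rw [reindexSMul, HilbertBasis.coe_mk]

end HilbertBasis

end InnerProductSpace

theorem exists_anticommuting_unitaries {H : Type*} [NormedAddCommGroup H]
    [InnerProductSpace ℝ H] [CompleteSpace H] (hH : ¬FiniteDimensional ℝ H) :
    ∃ J C : H →L[ℝ] H, J ∈ unitary (H →L[ℝ] H) ∧ J * J = -1 ∧
      C ∈ unitary (H →L[ℝ] H) ∧ C * C = 1 ∧ C * J = -(J * C) := by
  obtain ⟨w, b, -⟩ := exists_hilbertBasis ℝ H
  have := b.infinite_of_not_finiteDimensional hH
  obtain ⟨d⟩ : Nonempty (w ⊕ w ≃ w) := Cardinal.eq.mp <| by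
    simp only [Cardinal.mk_sum, Cardinal.lift_id]
    exact Cardinal.add_eq_self (Cardinal.aleph0_le_mk w)
  obtain ⟨b⟩ : Nonempty (HilbertBasis (w ⊕ w) ℝ H) :=
    ⟨b.reindexSMul d 1 fun _ => norm_one⟩
  let ε : w ⊕ w → ℝ := Sum.elim 1 (-1)
  have hε : ∀ i, ‖ε i‖ = 1 := by rintro (i | i) <;> simp [ε]
  have hε' : ∀ i, ‖(-ε) i‖ = 1 := fun i => by rw [Pi.neg_apply, norm_neg, hε]
  -- `J = [[0, 1], [-1, 0]]` and `C = [[1, 0], [0, -1]]` on `H ≅ ℓ²(w) ⊕ ℓ²(w)`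
  let J := b.equiv (b.reindexSMul (Equiv.sumComm w w) (-ε) hε')
  let C := b.equiv (b.reindexSMul (Equiv.refl _) ε hε)
  refine ⟨J, C, (Unitary.linearIsometryEquiv.symm J).2, ?_,
    (Unitary.linearIsometryEquiv.symm C).2, ?_, ?_⟩ <;>
    refine b.continuousLinearMap_ext fun i => ?_ <;> rcases i with i | i <;> simp [J, C, ε]

/-- every bounded operator on an infinite-dimensional real Hilbert space is
a finite real linear combination of orthogonal (unitary) operators. -/
theorem bounded_op_linear_combination_of_orthogonals
    {H : Type*} [NormedAddCommGroup H] [InnerProductSpace ℝ H] [CompleteSpace H]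
    (hH : ¬ FiniteDimensional ℝ H)
    (T : H →L[ℝ] H) :
    ∃ (n : ℕ) (c : Fin n → ℝ) (U : Fin n → (H →L[ℝ] H)),
      (∀ i, U i ∈ unitary (H →L[ℝ] H)) ∧ T = ∑ i, c i • U i := by
  obtain ⟨J, C, hJ, hJ2, hC, hC2, hCJ⟩ := exists_anticommuting_unitaries hH
  have hT : T ∈ unitarySpan (H →L[ℝ] H) :=
    unitarySpan_eq_top hJ hJ2 hC hC2 hCJ ▸ Submodule.mem_top
  obtain ⟨n, c, U, hsum⟩ := Submodule.mem_span_set'.mp hT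
  exact ⟨n, c, fun i => U i, fun i => (U i).2, hsum.symm⟩
end

section
/- Let H be a real Hilbert space and let B : H →L[ℝ] H be a self-adjoint (symmetric) bounded operator with ‖B‖ ≤ 1. Then the block-diagonal operator diag(B, −B) on the Hilbert space direct sum H ⊕ H (the space H × H with the ℓ² product inner product), given by (x, y) ↦ (B x, −B y), is the average of two orthogonal operators: there exist orthogonal operators U and V on H ⊕ H such that diag(B, −B) = (1/2 : ℝ) • (U + V). -/
/-!
If `S` is a self-adjoint square root of `1 - B²` commuting with `B`, the block operators
`[[B, S], [S, -B]]` and `[[B, -S], [-S, -B]]` are self-adjoint involutions, hence orthogonal,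
and their average is `diag(B, -B)`.

The square root is a power series: with `C(x) = ∑ catalan n * xⁿ`, which satisfies
`C = 1 + x C²`, take `S = 1 - (B²/2) C(B²/4)`. The series converges absolutely for `‖B²‖ ≤ 1`
because the same functional equation bounds the partial sums of `∑ catalan n / 4ⁿ` by `2`.
-/

open Finset

noncomputable def catalanCoeff (n : ℕ) : ℝ := catalan n / 4 ^ n

lemma catalanCoeff_nonneg (n : ℕ) : 0 ≤ catalanCoeff n := by unfold catalanCoeff; positivity

@[simp] lemma catalanCoeff_zero : catalanCoeff 0 = 1 := by simp [catalanCoeff]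

lemma sum_antidiagonal_catalanCoeff_mul (n : ℕ) :
    ∑ p ∈ antidiagonal n, catalanCoeff p.1 * catalanCoeff p.2 = 4 * catalanCoeff (n + 1) := by
  have h : ∀ p ∈ antidiagonal n,
      catalanCoeff p.1 * catalanCoeff p.2 = (catalan p.1 * catalan p.2 : ℕ) / 4 ^ n := by
    rintro ⟨i, j⟩ hij
    rw [HasAntidiagonal.mem_antidiagonal] at hij
    simp only [catalanCoeff, Nat.cast_mul, div_mul_div_comm, ← pow_add, hij]
  rw [sum_congr rfl h, ← sum_div, ← Nat.cast_sum, ← catalan_succ', catalanCoeff, pow_succ]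
  field_simp

lemma sum_range_sum_antidiagonal_le_sq {f : ℕ → ℝ} (hf : ∀ n, 0 ≤ f n) (N : ℕ) :
    ∑ n ∈ range N, ∑ p ∈ antidiagonal n, f p.1 * f p.2 ≤ (∑ n ∈ range N, f n) ^ 2 := by
  rw [sq, sum_mul_sum, ← sum_product', ← sum_biUnion]
  · apply sum_le_sum_of_subset_of_nonneg
    · intro p hp
      simp only [mem_biUnion, mem_range, HasAntidiagonal.mem_antidiagonal] at hp
      simp only [mem_product, mem_range]
      omega
    · exact fun p _ _ => mul_nonneg (hf _) (hf _)
  · intro a _ b _ hab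
    exact disjoint_left.2 fun p hpa hpb => hab <|
      (HasAntidiagonal.mem_antidiagonal.1 hpa).symm.trans (HasAntidiagonal.mem_antidiagonal.1 hpb)

lemma sum_range_catalanCoeff_le_two (N : ℕ) : ∑ n ∈ range N, catalanCoeff n ≤ 2 := by
  induction N with
  | zero => norm_num
  | succ N ih =>
    have hconv :
        4 * ∑ n ∈ range N, catalanCoeff (n + 1) ≤ (∑ n ∈ range N, catalanCoeff n) ^ 2 := by
      simpa only [sum_antidiagonal_catalanCoeff_mul, ← mul_sum] using
        sum_range_sum_antidiagonal_le_sq catalanCoeff_nonneg N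
    have hnonneg : 0 ≤ ∑ n ∈ range N, catalanCoeff n :=
      sum_nonneg fun n _ => catalanCoeff_nonneg n
    rw [sum_range_succ', catalanCoeff_zero]
    nlinarith

lemma summable_catalanCoeff : Summable catalanCoeff :=
  summable_of_sum_range_le catalanCoeff_nonneg sum_range_catalanCoeff_le_two

section BanachAlgebra

variable {A : Type*} [NormedRing A] [NormedAlgebra ℝ A] {a : A}

lemma norm_catalanCoeff_smul_pow_le (ha : ‖a‖ ≤ 1) {n : ℕ} (hn : 0 < n) :
    ‖catalanCoeff n • a ^ n‖ ≤ catalanCoeff n := by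
  rw [norm_smul, Real.norm_of_nonneg (catalanCoeff_nonneg n)]
  exact mul_le_of_le_one_right (catalanCoeff_nonneg n)
    ((norm_pow_le' a hn).trans (pow_le_one₀ (norm_nonneg a) ha))

lemma summable_norm_catalanCoeff_smul_pow (ha : ‖a‖ ≤ 1) :
    Summable fun n => ‖catalanCoeff n • a ^ n‖ :=
  .of_norm_bounded_eventually_nat summable_catalanCoeff <| Filter.eventually_atTop.2
    ⟨1, fun _ hn => (norm_norm _).trans_le (norm_catalanCoeff_smul_pow_le ha hn)⟩

/-- `C(a / 4)` for the Catalan generating function `C(x) = ∑ catalan n * xⁿ`. -/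
noncomputable def catalanGenFun (a : A) : A := ∑' n, catalanCoeff n • a ^ n

lemma Commute.catalanGenFun_right {b : A} (h : Commute b a) : Commute b (catalanGenFun a) :=
  Commute.tsum_right b fun n => (h.pow_right n).smul_right _

lemma IsSelfAdjoint.catalanGenFun [StarRing A] [StarModule ℝ A] [ContinuousStar A]
    (ha : IsSelfAdjoint a) : IsSelfAdjoint (catalanGenFun a) := by
  rw [IsSelfAdjoint, _root_.catalanGenFun, tsum_star]
  exact tsum_congr fun n => ((IsSelfAdjoint.all _).smul (ha.pow n)).star_eq

/-- A square root of `1 - a`, from `1 - √(1 - 4x) = 2x C(x)`. -/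
noncomputable def sqrtOneSub (a : A) : A := 1 - (2⁻¹ : ℝ) • (a * catalanGenFun a)

lemma Commute.sqrtOneSub_right {b : A} (h : Commute b a) : Commute b (sqrtOneSub a) :=
  (Commute.one_right b).sub_right ((h.mul_right h.catalanGenFun_right).smul_right _)

lemma IsSelfAdjoint.sqrtOneSub [StarRing A] [StarModule ℝ A] [ContinuousStar A]
    (ha : IsSelfAdjoint a) : IsSelfAdjoint (sqrtOneSub a) :=
  (IsSelfAdjoint.one A).sub <| (IsSelfAdjoint.all _).smul <|
    (ha.commute_iff ha.catalanGenFun).1 (Commute.refl a).catalanGenFun_right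

variable [CompleteSpace A]

/-- The functional equation `C(x) = 1 + x C(x)²`. -/
lemma mul_catalanGenFun_mul_self (ha : ‖a‖ ≤ 1) :
    a * (catalanGenFun a * catalanGenFun a) = (4 : ℝ) • (catalanGenFun a - 1) := by
  have hsum := summable_norm_catalanCoeff_smul_pow ha
  have hcauchy : ∀ n, ∑ p ∈ antidiagonal n,
      (catalanCoeff p.1 • a ^ p.1) * (catalanCoeff p.2 • a ^ p.2)
        = (4 * catalanCoeff (n + 1)) • a ^ n := fun n => by
    rw [← sum_antidiagonal_catalanCoeff_mul, sum_smul]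
    refine sum_congr rfl fun p hp => ?_
    rw [smul_mul_smul_comm, ← pow_add, HasAntidiagonal.mem_antidiagonal.1 hp]
  have hmul : ∀ n, a * ((4 * catalanCoeff (n + 1)) • a ^ n)
      = (4 : ℝ) • (catalanCoeff (n + 1) • a ^ (n + 1)) := fun n => by
    rw [mul_smul_comm, ← pow_succ', mul_smul]
  rw [catalanGenFun, tsum_mul_tsum_eq_tsum_sum_antidiagonal_of_summable_norm hsum hsum,
    tsum_congr hcauchy,
    ← ((summable_norm_sum_mul_antidiagonal_of_summable_norm hsum hsum).of_norm.congr
      hcauchy).tsum_mul_left, tsum_congr hmul,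
    ((summable_nat_add_iff 1).2 hsum.of_norm).tsum_const_smul, hsum.of_norm.tsum_eq_zero_add,
    catalanCoeff_zero, one_smul, pow_zero, add_sub_cancel_left]

lemma sqrtOneSub_mul_self (ha : ‖a‖ ≤ 1) : sqrtOneSub a * sqrtOneSub a = 1 - a := by
  have hsq : (a * catalanGenFun a) * (a * catalanGenFun a)
      = (4 : ℝ) • (a * catalanGenFun a) - (4 : ℝ) • a := by
    rw [(Commute.refl a).catalanGenFun_right.symm.mul_mul_mul_comm, mul_assoc,
      mul_catalanGenFun_mul_self ha, mul_smul_comm, mul_sub, mul_one, smul_sub]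
  rw [sqrtOneSub, sub_mul, mul_sub, mul_sub, one_mul, mul_one, one_mul, smul_mul_smul_comm, hsq]
  module

end BanachAlgebra

section ReflectionBlock

open scoped InnerProductSpace

variable {𝕜 H : Type*} [RCLike 𝕜] [NormedAddCommGroup H] [InnerProductSpace 𝕜 H]

/-- The block operator `[[P, Q], [Q, -P]]` on `H ⊕ H`. -/
noncomputable def reflectionBlock (P Q : H →L[𝕜] H) : WithLp 2 (H × H) →L[𝕜] WithLp 2 (H × H) :=
  (WithLp.prodContinuousLinearEquiv 2 𝕜 H H).symm.toContinuousLinearMap ∘L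
    (P.coprod Q).prod (Q.coprod (-P)) ∘L
    (WithLp.prodContinuousLinearEquiv 2 𝕜 H H).toContinuousLinearMap

@[simp]
lemma ofLp_reflectionBlock_apply (P Q : H →L[𝕜] H) (z : WithLp 2 (H × H)) :
    (reflectionBlock P Q z).ofLp = (P z.ofLp.1 + Q z.ofLp.2, Q z.ofLp.1 - P z.ofLp.2) := by
  simp [reflectionBlock, sub_eq_add_neg]

lemma reflectionBlock_mul_self {P Q : H →L[𝕜] H} (hPQ : Commute P Q) (h : P * P + Q * Q = 1) :
    reflectionBlock P Q * reflectionBlock P Q = 1 := by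
  have hx : ∀ x, P (P x) + Q (Q x) = x := fun x => by simpa using congr($h x)
  have hc : ∀ x, P (Q x) = Q (P x) := fun x => congr($hPQ.eq x)
  ext z
  apply WithLp.ofLp_injective
  simp only [mul_apply_eq_comp, ofLp_reflectionBlock_apply, map_add, map_sub, one_apply_eq_self]
  refine Prod.ext ?_ ?_
  · linear_combination (norm := module) hx z.ofLp.1 + hc z.ofLp.2
  · linear_combination (norm := module) hx z.ofLp.2 - hc z.ofLp.1

lemma isSelfAdjoint_reflectionBlock [CompleteSpace H] {P Q : H →L[𝕜] H}
    (hP : IsSelfAdjoint P) (hQ : IsSelfAdjoint Q) : IsSelfAdjoint (reflectionBlock P Q) := by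
  have hP' (x y : H) : ⟪P x, y⟫_𝕜 = ⟪x, P y⟫_𝕜 := hP.isSymmetric x y
  have hQ' (x y : H) : ⟪Q x, y⟫_𝕜 = ⟪x, Q y⟫_𝕜 := hQ.isSymmetric x y
  refine LinearMap.IsSymmetric.isSelfAdjoint fun z w => ?_
  simp only [ContinuousLinearMap.coe_coe, WithLp.prod_inner_apply, ofLp_reflectionBlock_apply,
    inner_add_left, inner_add_right, inner_sub_left, inner_sub_right, hP', hQ']
  ring

lemma reflectionBlock_mem_unitary [CompleteSpace H] {P Q : H →L[𝕜] H}
    (hP : IsSelfAdjoint P) (hQ : IsSelfAdjoint Q) (hPQ : Commute P Q) (h : P * P + Q * Q = 1) :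
    reflectionBlock P Q ∈ unitary (WithLp 2 (H × H) →L[𝕜] WithLp 2 (H × H)) := by
  rw [Unitary.mem_iff, (isSelfAdjoint_reflectionBlock hP hQ).star_eq, and_self]
  exact reflectionBlock_mul_self hPQ h

lemma reflectionBlock_add_reflectionBlock_neg (P Q : H →L[𝕜] H) :
    reflectionBlock P Q + reflectionBlock P (-Q) =
      (2 : 𝕜) • ((WithLp.prodContinuousLinearEquiv 2 𝕜 H H).symm.toContinuousLinearMap ∘L
        P.prodMap (-P) ∘L (WithLp.prodContinuousLinearEquiv 2 𝕜 H H).toContinuousLinearMap) := by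
  ext z
  apply WithLp.ofLp_injective
  refine Prod.ext ?_ ?_ <;>
    simp only [add_apply, WithLp.ofLp_add, ofLp_reflectionBlock_apply, WithLp.ofLp_fst,
      WithLp.ofLp_snd, neg_apply, Prod.mk_add_mk, smul_apply, ContinuousLinearMap.comp_apply,
      ContinuousLinearEquiv.coe_coe, WithLp.prodContinuousLinearEquiv_apply,
      ContinuousLinearMap.coe_prodMap', FunLike.coe_neg,
      WithLp.prodContinuousLinearEquiv_symm_apply, two_smul, Prod.fst_add, Prod.snd_add,
      Prod.map_fst, Prod.map_snd, Pi.neg_apply] <;>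
    abel

end ReflectionBlock

/-- for a self-adjoint bounded operator `B` of norm at most 1 on a real
Hilbert space `H`, the block-diagonal operator `diag(B, -B)` on the Hilbert space direct
sum `H ⊕ H` (i.e. `WithLp 2 (H × H)`) is the average of two orthogonal operators. -/
theorem blockDiag_neg_selfAdjoint_avg_of_two_orthogonals
    {H : Type*} [NormedAddCommGroup H] [InnerProductSpace ℝ H] [CompleteSpace H]
    (B : H →L[ℝ] H) (hB : IsSelfAdjoint B) (hnorm : ‖B‖ ≤ 1) :
    ∃ U V : WithLp 2 (H × H) →L[ℝ] WithLp 2 (H × H),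
      U ∈ unitary (WithLp 2 (H × H) →L[ℝ] WithLp 2 (H × H)) ∧
      V ∈ unitary (WithLp 2 (H × H) →L[ℝ] WithLp 2 (H × H)) ∧
      ((WithLp.prodContinuousLinearEquiv 2 ℝ H H).symm.toContinuousLinearMap ∘L
          (B.prodMap (-B)) ∘L
          (WithLp.prodContinuousLinearEquiv 2 ℝ H H).toContinuousLinearMap) =
        (1 / 2 : ℝ) • (U + V) := by
  set S := sqrtOneSub (B * B)
  have hBB : IsSelfAdjoint (B * B) := (hB.commute_iff hB).1 (Commute.refl B)
  have hS : IsSelfAdjoint S := hBB.sqrtOneSub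
  have hBS : Commute B S := ((Commute.refl B).mul_right (Commute.refl B)).sqrtOneSub_right
  have hBS_sq : B * B + S * S = 1 := by
    rw [sqrtOneSub_mul_self ((norm_mul_le B B).trans (mul_le_one₀ hnorm (norm_nonneg B) hnorm)),
      add_sub_cancel]
  refine ⟨reflectionBlock B S, reflectionBlock B (-S),
    reflectionBlock_mem_unitary hB hS hBS hBS_sq,
    reflectionBlock_mem_unitary hB hS.neg hBS.neg_right (by rwa [neg_mul_neg]), ?_⟩
  rw [reflectionBlock_add_reflectionBlock_neg, smul_smul]
  norm_num
end
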